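/- arXiv:0908.3307 — 3 statements merged into one kernel-verified Lean document; each statement's English description precedes it below -/
import Mathlib

section
/- Let D be a complete normed division ring of characteristic 0 such that the norm restricted to the rational numbers is the usual absolute value, i.e. ‖(q : D)‖ = |q| for every rational q. Then there exists a ring homomorphism ρ : ℝ → D such that ‖ρ(r)‖ = |r| for every real number r, and ρ(r)·d = d·ρ(r) for every r ∈ ℝ and every d ∈ D; i.e. D contains an isometric copy of the real field inside its center. -/
/-!
Since the norm agrees with the absolute value on `ℚ`, the cast `ℚ → D` is an isometry, hence
uniformly continuous, and it extends by completeness of `D` along the dense uniform embedding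
`ℚ → ℝ` to a continuous ring homomorphism `ℝ → D`. Both `‖ρ r‖ = |r|` and centrality are closed
conditions on `r` which hold on the dense subset `ℚ`, so they hold on all of `ℝ`.
-/

open Set

section RealCastHom

variable {D : Type*} [NormedDivisionRing D] [CharZero D]

theorem isometry_ratCast_of_norm_ratCast (hq : ∀ q : ℚ, ‖(q : D)‖ = |(q : ℝ)|) :
    Isometry ((↑) : ℚ → D) :=
  Isometry.of_dist_eq fun a b => by
    rw [dist_eq_norm, ← Rat.cast_sub, hq, Rat.dist_eq, Rat.cast_sub]

variable [CompleteSpace D]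

noncomputable def realCastHom (hq : ∀ q : ℚ, ‖(q : D)‖ = |(q : ℝ)|) : ℝ →+* D :=
  IsDenseInducing.extendRingHom (i := Rat.castHom ℝ) (f := Rat.castHom D)
    Rat.isUniformEmbedding_coe_real.isUniformInducing Rat.denseRange_cast
    (isometry_ratCast_of_norm_ratCast hq).uniformContinuous

variable (hq : ∀ q : ℚ, ‖(q : D)‖ = |(q : ℝ)|)

theorem continuous_realCastHom : Continuous (realCastHom hq) :=
  (uniformContinuous_uniformly_extend Rat.isUniformEmbedding_coe_real.isUniformInducing
    Rat.denseRange_cast (isometry_ratCast_of_norm_ratCast hq).uniformContinuous).continuous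

@[simp]
theorem realCastHom_ratCast (q : ℚ) : realCastHom hq q = q :=
  Rat.isDenseEmbedding_coe_real.isDenseInducing.extend_eq
    (isometry_ratCast_of_norm_ratCast hq).continuous q

theorem norm_realCastHom (r : ℝ) : ‖realCastHom hq r‖ = |r| :=
  Rat.denseRange_cast.induction_on r
    (isClosed_eq (continuous_realCastHom hq).norm continuous_abs)
    fun q => by rw [realCastHom_ratCast, hq]

theorem realCastHom_mem_centralizer (r : ℝ) : realCastHom hq r ∈ centralizer (univ : Set D) :=
  Rat.denseRange_cast.induction_on r
    ((isClosed_centralizer _).preimage (continuous_realCastHom hq))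
    fun q d _ => by rw [realCastHom_ratCast]; exact Rat.commute_cast d q

end RealCastHom

/-- A complete normed division ring of characteristic 0, whose norm restricts
to the usual absolute value on the rationals, contains an isometric copy of
the real field inside its center. -/
theorem complete_division_ring_contains_reals
    {D : Type*} [NormedDivisionRing D] [CompleteSpace D] [CharZero D]
    (hq : ∀ q : ℚ, ‖(q : D)‖ = |(q : ℝ)|) :
    ∃ ρ : ℝ →+* D, (∀ r : ℝ, ‖ρ r‖ = |r|) ∧
      ∀ (r : ℝ) (d : D), ρ r * d = d * ρ r :=
  ⟨realCastHom hq, norm_realCastHom hq,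
    fun r d => (realCastHom_mem_centralizer hq r d (mem_univ d)).symm⟩
end

section
/- Let A be a normed algebra over ℝ, let n ≥ 1, and let a₀, a₁, …, aₙ ∈ A. Define the monomial function pₙ : A → A by pₙ(x) = a₀·x·a₁·x·⋯·x·aₙ (containing n factors of x, multiplied in this order). Then for every x, h ∈ A, the n-th iterated Fréchet derivative of pₙ at x evaluated at the constant tuple of directions (h, …, h) equals n!·pₙ(h), i.e. D^n pₙ(x)(h, …, h) = n!·(a₀·h·a₁·h·⋯·h·aₙ). -/
/-!
`pₙ` is the restriction to the diagonal of the continuous `n`-multilinear map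
`(v₀, …, vₙ₋₁) ↦ a₀ v₀ a₁ ⋯ vₙ₋₁ aₙ`, and the `n`-th derivative of such a restriction is the
symmetrization `∑_σ f (v_σ)`. On a constant tuple all `n!` summands coincide.
-/

/-- The monomial `pₙ(x) = a₀·x·a₁·x·⋯·x·aₙ` with `n` factors of `x`. -/
def monomial {A : Type*} [Ring A] (a : ℕ → A) : ℕ → A → A
  | 0, _ => a 0
  | n + 1, x => monomial a n x * x * a (n + 1)

theorem monomial_eq_list_prod {A : Type*} [Ring A] (a : ℕ → A) (n : ℕ) (x : A) :
    monomial a n x = a 0 * (List.ofFn fun i : Fin n => x * a (i + 1)).prod := by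
  induction n with
  | zero => simp [monomial]
  | succ n ih =>
    rw [monomial, ih, List.ofFn_succ', List.prod_concat]
    simp [mul_assoc, Fin.last]

section MonomialMultilinear

variable {𝕜 A : Type*} [NontriviallyNormedField 𝕜] [NormedRing A] [NormedAlgebra 𝕜 A]

variable (𝕜) in
noncomputable def monomialMultilinear (a : ℕ → A) (n : ℕ) :
    ContinuousMultilinearMap 𝕜 (fun _ : Fin n => A) A :=
  (ContinuousLinearMap.mul 𝕜 A (a 0)).compContinuousMultilinearMap
    ((ContinuousMultilinearMap.mkPiAlgebraFin 𝕜 n A).compContinuousLinearMap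
      fun i => (ContinuousLinearMap.mul 𝕜 A).flip (a (i + 1)))

theorem monomialMultilinear_apply (a : ℕ → A) (n : ℕ) (v : Fin n → A) :
    monomialMultilinear 𝕜 a n v = a 0 * (List.ofFn fun i : Fin n => v i * a (i + 1)).prod := by
  simp [monomialMultilinear]

theorem monomialMultilinear_apply_const (a : ℕ → A) (n : ℕ) (x : A) :
    monomialMultilinear 𝕜 a n (fun _ => x) = monomial a n x := by
  rw [monomialMultilinear_apply, monomial_eq_list_prod]

end MonomialMultilinear

theorem iteratedFDeriv_monomial_diagonal_general
    {A : Type*} [NormedRing A] [NormedAlgebra ℝ A]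
    (n : ℕ) (a : ℕ → A) (x h : A) :
    iteratedFDeriv ℝ n (monomial a n) x (fun _ : Fin n => h)
      = n.factorial • monomial a n h := by
  have hdiag : monomial a n = fun y => monomialMultilinear ℝ a n fun _ => y :=
    funext fun y => (monomialMultilinear_apply_const a n y).symm
  conv_lhs => rw [hdiag]
  rw [ContinuousMultilinearMap.iteratedFDeriv_comp_diagonal,
    monomialMultilinear_apply_const, Finset.sum_const, Finset.card_univ, Fintype.card_perm,
    Fintype.card_fin]

/-- The `n`-th iterated Fréchet derivative of the degree-`n` monomial `pₙ`,
evaluated at the constant tuple `(h, …, h)`, equals `n! · pₙ(h)`. -/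
theorem iteratedFDeriv_monomial_diagonal
    {A : Type*} [NormedRing A] [NormedAlgebra ℝ A]
    (n : ℕ) (hn : 1 ≤ n) (a : ℕ → A) (x h : A) :
    iteratedFDeriv ℝ n (monomial a n) x (fun _ : Fin n => h)
      = n.factorial • monomial a n h :=
  iteratedFDeriv_monomial_diagonal_general n a x h
end

section
/- There is no differentiable function f : ℍ → ℍ on the real quaternions such that the Fréchet derivative of f satisfies Df(x)(h) = 3·h·x² for all x, h ∈ ℍ. (Such a derivative prescription is inconsistent because the resulting second derivative would fail to be symmetric.) -/
/-!
If `Df(x)` is right multiplication by `c x²` with `c ≠ 0`, then differentiating once more at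
`x = 1` gives the second derivative `(v, w) ↦ 2c · w v`. Its symmetry forces `w v = v w`, so the
algebra is commutative, whereas `i j = k = -(j i)` in the quaternions.
-/

open ContinuousLinearMap

theorem hasFDerivAt_sq_one {𝕜 A : Type*} [NontriviallyNormedField 𝕜] [NormedRing A]
    [NormedAlgebra 𝕜 A] :
    HasFDerivAt (fun x : A => x ^ 2) ((2 : 𝕜) • ContinuousLinearMap.id 𝕜 A) 1 := by
  convert hasFDerivAt_pow' (𝕜 := 𝕜) 2 (x := (1 : A)) using 1
  ext v
  simp [two_smul]

theorem commute_of_forall_hasFDerivAt_smul_mul_flip_sq {𝕜 A : Type*} [RCLike 𝕜] [NormedRing A]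
    [NormedAlgebra 𝕜 A] {f : A → A} {c : 𝕜} (hc : c ≠ 0)
    (hf : ∀ x, HasFDerivAt f (c • (mul 𝕜 A).flip (x ^ 2)) x) (v w : A) : Commute v w := by
  have hf' : HasFDerivAt (fun x : A => c • (mul 𝕜 A).flip (x ^ 2))
      (c • (mul 𝕜 A).flip.comp ((2 : 𝕜) • ContinuousLinearMap.id 𝕜 A)) 1 :=
    ((mul 𝕜 A).flip.hasFDerivAt.comp 1 hasFDerivAt_sq_one).const_smul c
  have hsymm := second_derivative_symmetric hf hf' w v
  simp only [smul_apply, comp_apply, id_apply, flip_apply, mul_apply', mul_smul_comm] at hsymm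
  exact smul_right_injective A (two_ne_zero (α := 𝕜)) (smul_right_injective A hc hsymm)

theorem Quaternion.not_commute_i_j :
    ¬ Commute (⟨0, 1, 0, 0⟩ : Quaternion ℝ) ⟨0, 0, 1, 0⟩ := by
  intro h
  have hk := congrArg QuaternionAlgebra.imK h.eq
  norm_num at hk

/-- There is no differentiable function on the quaternions whose Fréchet
derivative is `h ↦ 3·h·x²` at every point `x`. -/
theorem no_function_with_derivative_three_h_x_sq :
    ¬ ∃ f : Quaternion ℝ → Quaternion ℝ, Differentiable ℝ f ∧
        ∀ x h : Quaternion ℝ, fderiv ℝ f x h = 3 * h * x ^ 2 := by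
  rintro ⟨f, hf, hD⟩
  have hf' : ∀ x, HasFDerivAt f ((3 : ℝ) • (mul ℝ (Quaternion ℝ)).flip (x ^ 2)) x := by
    intro x
    refine (hf x).hasFDerivAt.congr_fderiv (ext fun h => ?_)
    rw [hD, mul_assoc, smul_apply, flip_apply, mul_apply', Algebra.smul_def, map_ofNat]
  exact Quaternion.not_commute_i_j
    (commute_of_forall_hasFDerivAt_smul_mul_flip_sq three_ne_zero hf' _ _)
end
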